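/- arXiv:1807.00698 — 2 statements merged into one kernel-verified Lean document; each statement's English description precedes it below -/
import Mathlib

section
/- Let f : ℝ^n → ℝ be a smooth function and v ∈ ℝ^n with ∇f(v) ≠ 0. Define Ω = {x : f(x) ≤ f(v)}. Then the half-space Q = {x : ⟨∇f(v), x − v⟩ ≤ 0} is a tent of Ω at v. -/
open Filter Asymptotics Topology

def IsConeWithVertex {n : ℕ} (Q : Set (EuclideanSpace ℝ (Fin n)))
    (v : EuclideanSpace ℝ (Fin n)) : Prop :=
  v ∈ Q ∧ ∀ x ∈ Q, ∀ α : ℝ, 0 ≤ α → v + α • (x - v) ∈ Q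

def IsTent {n : ℕ} (Ω Q : Set (EuclideanSpace ℝ (Fin n)))
    (v : EuclideanSpace ℝ (Fin n)) : Prop :=
  Convex ℝ Q ∧ IsConeWithVertex Q v ∧
  ∃ φ : EuclideanSpace ℝ (Fin n) → EuclideanSpace ℝ (Fin n),
    (fun x => φ x - x) =o[𝓝 v] (fun x => x - v) ∧
    ∃ ε > (0 : ℝ), ∀ x ∈ Q, ‖x - v‖ < ε → φ x ∈ Ω

/-- The half-space `{x : ⟨∇f(v), x − v⟩ ≤ 0}` is a tent of the sublevel set
`{x : f(x) ≤ f(v)}` at `v` whenever `∇f(v) ≠ 0`. -/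
theorem halfSpace_isTent_of_sublevel {n : ℕ} (f : EuclideanSpace ℝ (Fin n) → ℝ)
    (v : EuclideanSpace ℝ (Fin n)) (hf : ContDiff ℝ (⊤ : ℕ∞) f)
    (hgrad : gradient f v ≠ 0) :
    IsTent {x | f x ≤ f v}
      {x | inner ℝ (gradient f v) (x - v) ≤ (0 : ℝ)} v := by
  classical
  set g := gradient f v with hg
  have hgnorm : (‖g‖ : ℝ) ^ 2 ≠ 0 :=
    pow_ne_zero _ (norm_ne_zero_iff.2 hgrad)
  refine ⟨?_, ⟨?_, ?_⟩, ?_⟩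
  · intro x hx y hy a b ha hb hab
    simp only [Set.mem_setOf_eq] at *
    have key : a • x + b • y - v = a • (x - v) + b • (y - v) + ((a + b) - 1) • v := by
      module
    rw [key, hab, sub_self, zero_smul, add_zero, inner_add_right,
      real_inner_smul_right, real_inner_smul_right]
    nlinarith [mul_nonneg ha (neg_nonneg.2 hx), mul_nonneg hb (neg_nonneg.2 hy)]
  · simp
  · intro x hx α hα
    simp only [Set.mem_setOf_eq, add_sub_cancel_left, real_inner_smul_right] at *
    exact mul_nonpos_of_nonneg_of_nonpos hα hx
  -- the tent map: local inverse of F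
  set K := (ℝ ∙ g)ᗮ with hK
  set L : EuclideanSpace ℝ (Fin n) →L[ℝ] EuclideanSpace ℝ (Fin n) :=
    K.subtypeL.comp (Submodule.orthogonalProjectionOnto K) with hL
  set w : EuclideanSpace ℝ (Fin n) := ((‖g‖ : ℝ) ^ 2)⁻¹ • g with hw
  set F : EuclideanSpace ℝ (Fin n) → EuclideanSpace ℝ (Fin n) :=
    fun x => v + (f x - f v) • w + L (x - v) with hF
  have hfd : HasStrictFDerivAt f (fderiv ℝ f v) v :=
    hf.contDiffAt.hasStrictFDerivAt (by simp)
  have hfdv : ∀ h, fderiv ℝ f v h = inner ℝ g h := by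
    intro h
    rw [hg, gradient]
    exact (InnerProductSpace.toDual_symm_apply).symm
  have hderiv : HasStrictFDerivAt F
      ((ContinuousLinearEquiv.refl ℝ (EuclideanSpace ℝ (Fin n)) :
        EuclideanSpace ℝ (Fin n) ≃L[ℝ] EuclideanSpace ℝ (Fin n)) :
        EuclideanSpace ℝ (Fin n) →L[ℝ] EuclideanSpace ℝ (Fin n)) v := by
    have h1 : HasStrictFDerivAt (fun x => (f x - f v) • w)
        ((fderiv ℝ f v).smulRight w) v := (hfd.sub_const (f v)).smul_const w
    have h2 : HasStrictFDerivAt (fun x => L (x - v)) L v := by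
      simpa using L.hasStrictFDerivAt.comp v ((hasStrictFDerivAt_id v).sub_const v)
    have h3 := (h1.add h2).const_add v
    have hD : (fderiv ℝ f v).smulRight w + L
        = ((ContinuousLinearEquiv.refl ℝ (EuclideanSpace ℝ (Fin n)) :
        EuclideanSpace ℝ (Fin n) ≃L[ℝ] EuclideanSpace ℝ (Fin n)) :
        EuclideanSpace ℝ (Fin n) →L[ℝ] EuclideanSpace ℝ (Fin n)) := by
      refine ContinuousLinearMap.ext fun h => ?_
      simp only [ContinuousLinearMap.add_apply, ContinuousLinearMap.smulRight_apply,
        ContinuousLinearEquiv.coe_coe, ContinuousLinearEquiv.refl_apply]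
      rw [hfdv]
      have hproj : ((Submodule.orthogonalProjectionOnto (ℝ ∙ g) h : EuclideanSpace ℝ (Fin n)))
          = ((inner ℝ g h : ℝ) / ‖g‖ ^ 2) • g := Submodule.starProjection_singleton ℝ h
      have hsum : ((Submodule.orthogonalProjectionOnto (ℝ ∙ g) h : EuclideanSpace ℝ (Fin n)))
          + ((Submodule.orthogonalProjectionOnto (ℝ ∙ g)ᗮ h : EuclideanSpace ℝ (Fin n))) = h :=
          Submodule.starProjection_add_starProjection_orthogonal (K := ℝ ∙ g) h
      rw [hproj] at hsum
      calc (inner ℝ g h : ℝ) • w + L h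
          = ((inner ℝ g h : ℝ) / ‖g‖ ^ 2) • g
            + ((Submodule.orthogonalProjectionOnto (ℝ ∙ g)ᗮ h : EuclideanSpace ℝ (Fin n))) := by
            rw [hw, smul_smul, div_eq_mul_inv]
            simp only [hL, hK, ContinuousLinearMap.coe_comp', Function.comp_apply,
              Submodule.coe_subtypeL', Submodule.coe_subtype]
            rfl
        _ = h := hsum
    rw [hD] at h3
    rw [hF]
    simp only [add_assoc]
    exact h3
  have hFv : F v = v := by simp [hF]
  set φ := hderiv.localInverse F _ v with hφ
  have hφv : φ v = v := by
    have := hderiv.localInverse_apply_image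
    rwa [hFv] at this
  have hri : ∀ᶠ y in 𝓝 v, F (φ y) = y := by
    have := hderiv.eventually_right_inverse
    rwa [hFv] at this
  have hsd : HasStrictFDerivAt φ
      ((ContinuousLinearEquiv.refl ℝ (EuclideanSpace ℝ (Fin n)) :
        EuclideanSpace ℝ (Fin n) ≃L[ℝ] EuclideanSpace ℝ (Fin n)) :
        EuclideanSpace ℝ (Fin n) →L[ℝ] EuclideanSpace ℝ (Fin n)) v := by
    have := hderiv.to_localInverse
    rwa [hFv] at this
  have holittle : (fun x => φ x - x) =o[𝓝 v] (fun x => x - v) := by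
    have h0 := hsd.hasFDerivAt.isLittleO
    simp only [ContinuousLinearEquiv.coe_coe, ContinuousLinearEquiv.refl_apply, hφv] at h0
    have : (fun x => φ x - v - (x - v)) = fun x => φ x - x := by
      funext x; module
    rwa [this] at h0
  obtain ⟨ε, hε, hεball⟩ := Metric.eventually_nhds_iff.1 hri
  refine ⟨φ, holittle, ε, hε, fun x hx hxε => ?_⟩
  have hFx : F (φ x) = x := hεball (by simpa [dist_eq_norm] using hxε)
  have hinw : (inner ℝ g w : ℝ) = 1 := by
    rw [hw, real_inner_smul_right, real_inner_self_eq_norm_sq]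
    field_simp
  have hinL : ∀ u, (inner ℝ g (L u) : ℝ) = 0 := by
    intro u
    have hm : (L u) ∈ (ℝ ∙ g)ᗮ := by
      simp only [hL, ContinuousLinearMap.coe_comp', Function.comp_apply,
        Submodule.coe_subtypeL', Submodule.coe_subtype]
      exact (Submodule.orthogonalProjectionOnto K u).2
    exact Submodule.inner_right_of_mem_orthogonal (Submodule.mem_span_singleton_self g) hm
  have hxv : x - v = (f (φ x) - f v) • w + L (φ x - v) := by
    conv_lhs => rw [← hFx]
    rw [hF]
    module
  have hkey : (inner ℝ g (x - v) : ℝ) = f (φ x) - f v := by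
    rw [hxv, inner_add_right, real_inner_smul_right, hinw, hinL, mul_one, add_zero]
  have : f (φ x) - f v ≤ 0 := by rw [← hkey]; exact hx
  simpa [Set.mem_setOf_eq] using sub_nonpos.1 this
end

section
/- Every smooth n-dimensional manifold M admits a smooth embedding i : M → ℝ^{2n+1} whose image i(M) is a closed subset of ℝ^{2n+1}. -/
/-!
Whitney's projection argument. The secant cone `{t • (g x - g y)}` of a `C¹` map `g` on an
`n`-manifold is the image of the `(2n+1)`-manifold `M × M × ℝ`, so its Hausdorff dimension is at
most `2n+1`; projecting a larger target along a direction outside it keeps the values of `g`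
apart, and iterating pushes any smooth map injectively into `ℝ^{2n+1}`.

Globally, take a smooth exhaustion `f`, maps `ψ k` injective on the compact slabs around
`f⁻¹[k, k+1]`, and glue the slabs of even and of odd index separately (they are disjoint) into a
bounded `g` with `(g, f)` injective. Projecting `(g, f) ∈ ℝ^{2n+1} × ℝ` along a direction
`(v₁, v₂)` outside its secant cone with `v₁ ≠ 0` and `v₂ ≠ 0` gives `x ↦ g x - f x • (v₂⁻¹ • v₁)`,
which is injective, and proper because `g` is bounded while `f` is proper.
-/

open scoped Manifold ContDiff Topology
open Set Function Module Topology

section Secant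

variable {X F G : Type*} [AddCommGroup F] [Module ℝ F] [AddCommGroup G] [Module ℝ G]

def secantCone (g : X → F) : Set F := {z | ∃ x y : X, ∃ t : ℝ, z = t • (g x - g y)}

theorem injOn_range_of_ker_le_span {g : X → F} {v : F} (hv : v ∉ secantCone g)
    {P : F →ₗ[ℝ] G} (hP : LinearMap.ker P ≤ ℝ ∙ v) : InjOn P (range g) := by
  rintro _ ⟨x, rfl⟩ _ ⟨y, rfl⟩ hxy
  have hker : g x - g y ∈ LinearMap.ker P := by rw [LinearMap.mem_ker, map_sub, hxy, sub_self]
  obtain ⟨c, hc⟩ := Submodule.mem_span_singleton.mp (hP hker)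
  rcases eq_or_ne c 0 with rfl | hc0
  · rw [zero_smul, eq_comm, sub_eq_zero] at hc
    exact hc
  · exact absurd ⟨x, y, c⁻¹, by rw [← hc, inv_smul_smul₀ hc0]⟩ hv

end Secant

theorem ContDiffOn.dimH_image_le_of_isOpen {E F : Type*} [NormedAddCommGroup E]
    [NormedSpace ℝ E] [FiniteDimensional ℝ E] [NormedAddCommGroup F] [NormedSpace ℝ F]
    {f : E → F} {s : Set E} (hf : ContDiffOn ℝ 1 f s) (hs : IsOpen s) :
    dimH (f '' s) ≤ dimH s :=
  dimH_image_le_of_locally_lipschitzOn fun _ hx =>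
    let ⟨C, t, ht, hlip⟩ := (hf.contDiffAt (hs.mem_nhds hx)).exists_lipschitzOnWith
    ⟨C, t, mem_nhdsWithin_of_mem_nhds ht, hlip⟩

theorem isProperMap_sub_smul {X G : Type*} [TopologicalSpace X] [NormedAddCommGroup G]
    [NormedSpace ℝ G] {g : X → G} {f : X → ℝ} (hg : Continuous g)
    (hgb : Bornology.IsBounded (range g)) (hf : Continuous f)
    (hfc : ∀ c, IsCompact (f ⁻¹' Iic c)) {w : G} (hw : w ≠ 0) :
    IsProperMap fun x => g x - f x • w := by
  have hcont : Continuous fun x => g x - f x • w := hg.sub (hf.smul continuous_const)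
  refine isProperMap_iff_isCompact_preimage.mpr ⟨hcont, fun K hK => ?_⟩
  obtain ⟨R, hR⟩ := hK.isBounded.exists_norm_le
  obtain ⟨B, hB⟩ := hgb.exists_norm_le
  have hw' : 0 < ‖w‖ := norm_pos_iff.mpr hw
  refine (hfc ((B + R) / ‖w‖)).of_isClosed_subset (hK.isClosed.preimage hcont) fun x hx => ?_
  have hfw : ‖f x • w‖ ≤ B + R :=
    calc ‖f x • w‖ = ‖g x - (g x - f x • w)‖ := by rw [sub_sub_cancel]
      _ ≤ ‖g x‖ + ‖g x - f x • w‖ := norm_sub_le _ _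
      _ ≤ B + R := add_le_add (hB _ (mem_range_self x)) (hR _ hx)
  rw [norm_smul, Real.norm_eq_abs] at hfw
  rw [mem_preimage, mem_Iic, le_div_iff₀ hw']
  exact (mul_le_mul_of_nonneg_right (le_abs_self (f x)) hw'.le).trans hfw

theorem locallyFinite_Ioo_intCast :
    LocallyFinite fun k : ℤ => Ioo ((k : ℝ) - 1 / 2) (k + 3 / 2) := by
  intro x
  refine ⟨Ioo (x - 1) (x + 1), Ioo_mem_nhds (by linarith) (by linarith),
    (finite_Icc (⌊x⌋ - 2) (⌊x⌋ + 2)).subset ?_⟩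
  rintro k ⟨y, ⟨hky, hyk⟩, hxy, hyx⟩
  have hlo : ((⌊x⌋ - 3 : ℤ) : ℝ) < k := by push_cast; linarith [Int.floor_le x]
  have hhi : (k : ℝ) < ((⌊x⌋ + 3 : ℤ) : ℝ) := by push_cast; linarith [Int.lt_floor_add_one x]
  have := Int.cast_lt.mp hlo
  have := Int.cast_lt.mp hhi
  exact ⟨by omega, by omega⟩

section Manifold

variable {E : Type*} [NormedAddCommGroup E] [NormedSpace ℝ E] [FiniteDimensional ℝ E]
  {H : Type*} [TopologicalSpace H] {I : ModelWithCorners ℝ E H}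
  {M : Type*} [TopologicalSpace M] [ChartedSpace H M]
  {F : Type*} [NormedAddCommGroup F] [NormedSpace ℝ F]
  {G : Type*} [NormedAddCommGroup G] [NormedSpace ℝ G]

theorem ContMDiff.dimH_range_le [I.Boundaryless] [IsManifold I 1 M] [SigmaCompactSpace M]
    {f : M → F} (hf : ContMDiff I 𝓘(ℝ, F) 1 f) : dimH (range f) ≤ finrank ℝ E := by
  obtain ⟨T, hTc, hT⟩ := countable_cover_nhds fun x : M => extChartAt_source_mem_nhds (I := I) x
  have hcover : range f ⊆ ⋃ c ∈ T, (f ∘ (extChartAt I c).symm) '' (extChartAt I c).target := by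
    rintro _ ⟨x, rfl⟩
    obtain ⟨c, hcT, hxc⟩ := mem_iUnion₂.mp (hT.symm ▸ mem_univ x : x ∈ ⋃ c ∈ T, _)
    exact mem_iUnion₂.mpr ⟨c, hcT, _, (extChartAt I c).map_source hxc,
      by rw [comp_apply, (extChartAt I c).left_inv hxc]⟩
  refine (dimH_mono hcover).trans ?_
  rw [dimH_bUnion hTc]
  refine iSup₂_le fun c _ => ?_
  have hsmooth : ContDiffOn ℝ 1 (f ∘ (extChartAt I c).symm) (extChartAt I c).target :=
    contMDiffOn_iff_contDiffOn.mp (hf.comp_contMDiffOn (contMDiffOn_extChartAt_symm c))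
  calc dimH ((f ∘ (extChartAt I c).symm) '' (extChartAt I c).target)
      ≤ dimH (extChartAt I c).target :=
        hsmooth.dimH_image_le_of_isOpen (isOpen_extChartAt_target c)
    _ ≤ dimH (univ : Set E) := dimH_mono (subset_univ _)
    _ = finrank ℝ E := Real.dimH_univ_eq_finrank E

theorem dimH_secantCone_le [I.Boundaryless] [IsManifold I 1 M] [SigmaCompactSpace M]
    {g : M → F} (hg : ContMDiff I 𝓘(ℝ, F) 1 g) :
    dimH (secantCone g) ≤ (2 * finrank ℝ E + 1 : ℕ) := by
  have hσ : ContMDiff (I.prod (I.prod 𝓘(ℝ, ℝ))) 𝓘(ℝ, F) 1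
      fun p : M × M × ℝ => p.2.2 • (g p.1 - g p.2.1) :=
    (contMDiff_snd.comp contMDiff_snd).smul
      ((hg.comp contMDiff_fst).sub (hg.comp (contMDiff_fst.comp contMDiff_snd)))
  have hrange : secantCone g = range fun p : M × M × ℝ => p.2.2 • (g p.1 - g p.2.1) := by
    ext z
    simp [secantCone, eq_comm]
  rw [hrange]
  convert hσ.dimH_range_le using 2
  simp only [finrank_prod, finrank_self]
  ring

theorem exists_continuousLinearMap_injOn_range [I.Boundaryless] [IsManifold I 1 M] [SigmaCompactSpace M]
    [FiniteDimensional ℝ F] [FiniteDimensional ℝ G] (hG : 2 * finrank ℝ E + 1 ≤ finrank ℝ G)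
    {g : M → F} (hg : ContMDiff I 𝓘(ℝ, F) 1 g) : ∃ L : F →L[ℝ] G, InjOn L (range g) := by
  induction hF : finrank ℝ F using Nat.strong_induction_on generalizing F with
  | _ m ih =>
  by_cases hm : m ≤ finrank ℝ G
  · obtain ⟨L, hL⟩ := finrank_le_iff_exists_linearMap.mp (hF ▸ hm)
    exact ⟨L.toContinuousLinearMap, hL.injOn⟩
  have hdim : dimH (secantCone g ∪ {0}) < finrank ℝ F := by
    rw [dimH_union, dimH_singleton, max_eq_left zero_le, hF]
    exact (dimH_secantCone_le hg).trans_lt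
      (by exact_mod_cast (by omega : 2 * finrank ℝ E + 1 < m))
  obtain ⟨v, hv⟩ := (dense_compl_of_dimH_lt_finrank hdim).nonempty
  simp only [mem_compl_iff, mem_union, mem_singleton_iff, not_or] at hv
  obtain ⟨q, hq⟩ := Submodule.exists_isCompl (ℝ ∙ v)
  let π : F →L[ℝ] q := (Submodule.projectionOnto q (ℝ ∙ v) hq.symm).toContinuousLinearMap
  have hπ : InjOn π (range g) :=
    injOn_range_of_ker_le_span hv.1 (Submodule.ker_projectionOnto hq.symm).le
  have hq_rank : finrank ℝ q < m := by
    have := Submodule.finrank_add_eq_of_isCompl hq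
    rw [finrank_span_singleton hv.2] at this
    omega
  obtain ⟨L, hL⟩ := ih _ hq_rank (π.contMDiff.comp hg) rfl
  refine ⟨L.comp π, ?_⟩
  rintro _ ⟨x, rfl⟩ _ ⟨y, rfl⟩ hxy
  exact hπ (mem_range_self x) (mem_range_self y) (hL (mem_range_self x) (mem_range_self y) hxy)

theorem SmoothBumpCovering.exists_finite_of_isCompact {s : Set M} (hs : IsCompact s) :
    ∃ t : Set M, t.Finite ∧ Nonempty (SmoothBumpCovering t I M s) := by
  let b : ∀ x : M, SmoothBumpFunction I x := fun x => Classical.arbitrary _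
  let U : M → Set M := fun x => interior {y | b x y = 1}
  have hxU : ∀ x, x ∈ U x := fun x =>
    mem_interior_iff_mem_nhds.mpr ((b x).eventuallyEq_one.mono fun _ hy => hy)
  obtain ⟨t, hts, htfin, hcover⟩ := hs.elim_finite_subcover_image (fun x _ => isOpen_interior)
    fun x hx => mem_biUnion hx (hxU x)
  have := htfin.to_subtype
  refine ⟨t, htfin, ⟨{
    c := (↑)
    toFun := fun i => b i
    c_mem' := fun i => hts i.2
    locallyFinite' := locallyFinite_of_finite _
    eventuallyEq_one' := fun x hx => ?_ }⟩⟩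
  obtain ⟨i, hit, hiU⟩ := mem_iUnion₂.mp (hcover hx)
  exact ⟨⟨i, hit⟩, Filter.eventually_of_mem (isOpen_interior.mem_nhds hiU) fun y hy =>
    interior_subset (s := {y | b i y = 1}) hy⟩

theorem SmoothBumpCovering.injOn_smul_extChartAt_prodMk [T2Space M] {ι : Type*} {s : Set M}
    (fb : SmoothBumpCovering ι I M s) :
    InjOn (fun x i => (fb i x • extChartAt I (fb.c i) x, fb i x)) s := by
  intro x hx y _ h
  simp only [funext_iff] at h
  obtain ⟨h₁, h₂⟩ := Prod.mk_inj.1 (h (fb.ind x hx))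
  rw [fb.apply_ind x hx] at h₂
  rw [← h₂, fb.apply_ind x hx, one_smul, one_smul] at h₁
  exact (extChartAt I (fb.c _)).injOn (fb.mem_extChartAt_ind_source x hx)
    (fb.mem_extChartAt_source_of_eq_one h₂.symm) h₁

theorem exists_contMDiff_injOn_of_isCompact [I.Boundaryless] [IsManifold I ∞ M] [T2Space M]
    [SigmaCompactSpace M] [FiniteDimensional ℝ G] (hG : 2 * finrank ℝ E + 1 ≤ finrank ℝ G)
    {s : Set M} (hs : IsCompact s) : ∃ ψ : M → G, ContMDiff I 𝓘(ℝ, G) ∞ ψ ∧ InjOn ψ s := by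
  obtain ⟨t, htfin, ⟨fb⟩⟩ := SmoothBumpCovering.exists_finite_of_isCompact (I := I) hs
  have := htfin.fintype
  have hsmooth : ContMDiff I 𝓘(ℝ, t → E × ℝ) ∞
      fun x i => (fb i x • extChartAt I (fb.c i) x, fb i x) :=
    contMDiff_pi_space.2 fun i =>
      ((fb i).contMDiff_smul contMDiffOn_extChartAt).prodMk_space (fb i).contMDiff
  obtain ⟨L, hL⟩ := exists_continuousLinearMap_injOn_range hG (hsmooth.of_le (by simp))
  refine ⟨L ∘ _, L.contMDiff.comp hsmooth, fun x hx y hy hxy => ?_⟩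
  exact fb.injOn_smul_extChartAt_prodMk hx hy (hL (mem_range_self x) (mem_range_self y) hxy)

theorem exists_contMDiff_injOn_norm_le_one_of_isCompact [I.Boundaryless] [IsManifold I ∞ M]
    [T2Space M] [SigmaCompactSpace M] [FiniteDimensional ℝ G]
    (hG : 2 * finrank ℝ E + 1 ≤ finrank ℝ G) {s : Set M} (hs : IsCompact s) :
    ∃ ψ : M → G, ContMDiff I 𝓘(ℝ, G) ∞ ψ ∧ InjOn ψ s ∧ ∀ x ∈ s, ‖ψ x‖ ≤ 1 := by
  obtain ⟨ψ, hψ, hinj⟩ := exists_contMDiff_injOn_of_isCompact (I := I) hG hs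
  obtain ⟨C, hC⟩ := hs.exists_bound_of_continuousOn hψ.continuous.continuousOn
  have hpos : 0 < max C 1 := lt_max_of_lt_right one_pos
  refine ⟨fun x => (max C 1)⁻¹ • ψ x, contMDiff_const (I' := 𝓘(ℝ, ℝ)) |>.smul hψ,
    fun x hx y hy hxy => hinj hx hy (smul_right_injective G (inv_ne_zero hpos.ne') hxy),
    fun x hx => ?_⟩
  rw [norm_smul, norm_inv, Real.norm_of_nonneg hpos.le, inv_mul_le_one₀ hpos]
  exact (hC x hx).trans (le_max_left C 1)

theorem exists_contMDiff_isCompact_preimage_Iic [IsManifold I ∞ M] [T2Space M]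
    [SigmaCompactSpace M] : ∃ f : M → ℝ, ContMDiff I 𝓘(ℝ) ∞ f ∧ ∀ c, IsCompact (f ⁻¹' Iic c) := by
  have := Manifold.locallyCompact_of_finiteDimensional (M := M) I
  let K := CompactExhaustion.choice M
  obtain ⟨f, hf⟩ := exists_contMDiffMap_forall_mem_convex_of_local_const (n := ⊤) I
    (t := fun x => Ici (K.find x : ℝ)) (fun _ => convex_Ici _) fun x =>
      ⟨K.find x + 1, Filter.eventually_of_mem
        (isOpen_interior.mem_nhds (K.subset_interior_succ _ (K.mem_find x))) fun y hy =>
          mem_Ici.mpr (mod_cast K.mem_iff_find_le.mp (interior_subset hy))⟩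
  refine ⟨f, f.contMDiff, fun c => ?_⟩
  refine (K.isCompact ⌊c⌋₊).of_isClosed_subset
    (isClosed_Iic.preimage f.contMDiff.continuous) fun x hx => ?_
  exact K.mem_iff_find_le.mpr (Nat.le_floor ((mem_Ici.mp (hf x)).trans hx))

theorem exists_contMDiff_eqOn_of_pairwise_disjoint [IsManifold I ∞ M] [T2Space M]
    [SigmaCompactSpace M] {ι : Type*} {A V : ι → Set M} (hA : ∀ i, IsClosed (A i))
    (hV : ∀ i, IsOpen (V i)) (hAV : ∀ i, A i ⊆ V i) (hdisj : Pairwise (Disjoint on V))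
    (hlf : LocallyFinite V) {ψ : ι → M → G} (hψ : ∀ i, ContMDiff I 𝓘(ℝ, G) ∞ (ψ i))
    (hψ_le : ∀ i, ∀ x ∈ V i, ‖ψ i x‖ ≤ 1) :
    ∃ Φ : M → G, ContMDiff I 𝓘(ℝ, G) ∞ Φ ∧ (∀ x, ‖Φ x‖ ≤ 1) ∧ ∀ i, EqOn Φ (ψ i) (A i) := by
  choose χ hχ0 hχ1 hχ01 using fun i => exists_contMDiffMap_zero_one_of_isClosed (n := ⊤) I
    (hV i).isClosed_compl (hA i) (disjoint_compl_left.mono_right (hAV i))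
  have hsupp : ∀ i, support (fun x => χ i x • ψ i x) ⊆ V i := fun i x hx => by
    by_contra hxV
    exact hx (by simp [hχ0 i hxV])
  have hsum : ∀ i, ∀ x ∈ V i, ∑ᶠ j, χ j x • ψ j x = χ i x • ψ i x := fun i x hx =>
    finsum_eq_single _ i fun j hji => notMem_support.mp fun hj =>
      disjoint_left.mp (hdisj hji) (hsupp j hj) hx
  refine ⟨fun x => ∑ᶠ i, χ i x • ψ i x,
    contMDiff_finsum (fun i => (χ i).contMDiff.smul (hψ i)) (hlf.subset hsupp), fun x => ?_,
    fun i x hx => by simp [hsum i x (hAV i hx), hχ1 i hx]⟩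
  dsimp only
  by_cases hx : ∃ i, x ∈ V i
  · obtain ⟨i, hi⟩ := hx
    rw [hsum i x hi, norm_smul, Real.norm_of_nonneg (hχ01 i x).1]
    exact mul_le_one₀ (hχ01 i x).2 (norm_nonneg _) (hψ_le i x hi)
  · push Not at hx
    rw [finsum_eq_zero_of_forall_eq_zero fun i => notMem_support.mp fun h => hx i (hsupp i h)]
    simp

theorem exists_contMDiff_eqOn_preimage_Icc_of_emod_two_eq [IsManifold I ∞ M] [T2Space M]
    [SigmaCompactSpace M] {f : M → ℝ} (hf : Continuous f) {ψ : ℤ → M → G}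
    (hψ : ∀ k, ContMDiff I 𝓘(ℝ, G) ∞ (ψ k))
    (hψ_le : ∀ k : ℤ, ∀ x ∈ f ⁻¹' Ioo ((k : ℝ) - 1 / 2) (k + 3 / 2), ‖ψ k x‖ ≤ 1) (p : ℤ) :
    ∃ Φ : M → G, ContMDiff I 𝓘(ℝ, G) ∞ Φ ∧ (∀ x, ‖Φ x‖ ≤ 1) ∧
      ∀ k, k % 2 = p → EqOn Φ (ψ k) (f ⁻¹' Icc k (k + 1)) := by
  let V : ℤ → Set M := fun k => f ⁻¹' Ioo (k - 1 / 2) (k + 3 / 2)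
  have hdisj : ∀ j k : ℤ, j < k → j % 2 = k % 2 → Disjoint (V j) (V k) := fun j k hjk hp =>
    disjoint_left.mpr fun x hxj hxk => by
      have : (j : ℝ) + 2 ≤ k := by exact_mod_cast (by omega : j + 2 ≤ k)
      linarith [hxj.2, hxk.1]
  obtain ⟨Φ, hΦ, hΦ_le, hΦ_eq⟩ := exists_contMDiff_eqOn_of_pairwise_disjoint
    (ι := {k : ℤ // k % 2 = p}) (A := fun k => f ⁻¹' Icc k (k + 1)) (V := fun k => V k)
    (fun k => isClosed_Icc.preimage hf) (fun k => isOpen_Ioo.preimage hf)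
    (fun k x hx => ⟨by linarith [hx.1], by linarith [hx.2]⟩)
    (fun j k hjk => (lt_or_gt_of_ne (Subtype.coe_ne_coe.mpr hjk)).elim
      (fun h => hdisj _ _ h (j.2.trans k.2.symm)) fun h => (hdisj _ _ h (k.2.trans j.2.symm)).symm)
    ((locallyFinite_Ioo_intCast.preimage_continuous hf).comp_injective Subtype.val_injective)
    (fun k => hψ k) fun k => hψ_le k
  exact ⟨Φ, hΦ, hΦ_le, fun k hk => hΦ_eq ⟨k, hk⟩⟩

theorem exists_contMDiff_bounded_injective_prodMk [I.Boundaryless] [IsManifold I ∞ M]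
    [T2Space M] [SigmaCompactSpace M] [FiniteDimensional ℝ G]
    (hG : 2 * finrank ℝ E + 1 ≤ finrank ℝ G) {f : M → ℝ} (hf : Continuous f)
    (hfc : ∀ c, IsCompact (f ⁻¹' Iic c)) :
    ∃ g : M → G, ContMDiff I 𝓘(ℝ, G) ∞ g ∧ Bornology.IsBounded (range g) ∧
      Injective fun x => (g x, f x) := by
  choose ψ hψ hψ_inj hψ_le using fun k : ℤ =>
    exists_contMDiff_injOn_norm_le_one_of_isCompact (I := I) hG (hfc (k + 3 / 2))
  have hIcc : ∀ k : ℤ, f ⁻¹' Icc k (k + 1) ⊆ f ⁻¹' Iic (k + 3 / 2) := fun k _ hx =>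
    hx.2.trans (by linarith)
  choose Φ hΦ hΦ_le hΦ_eq using exists_contMDiff_eqOn_preimage_Icc_of_emod_two_eq hf hψ
    fun k x hx => hψ_le k x hx.2.le
  have hΦ01 : ContMDiff I 𝓘(ℝ, G × G) ∞ fun x => (Φ 0 x, Φ 1 x) := (hΦ 0).prodMk_space (hΦ 1)
  obtain ⟨L, hL⟩ := exists_continuousLinearMap_injOn_range hG (hΦ01.of_le (by simp))
  refine ⟨fun x => L (Φ 0 x, Φ 1 x), L.contMDiff.comp hΦ01, ?_, fun x y hxy => ?_⟩
  · refine (L.lipschitz.isBounded_image (Metric.isBounded_closedBall (x := 0) (r := 1))).subset ?_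
    rintro _ ⟨x, rfl⟩
    exact ⟨_, mem_closedBall_zero_iff.mpr (max_le (hΦ_le 0 x) (hΦ_le 1 x)), rfl⟩
  obtain ⟨hLxy, hfxy⟩ := Prod.mk.inj hxy
  have hΦxy : (Φ 0 x, Φ 1 x) = (Φ 0 y, Φ 1 y) := hL (mem_range_self x) (mem_range_self y) hLxy
  have hx : x ∈ f ⁻¹' Icc ⌊f x⌋ (⌊f x⌋ + 1) := ⟨Int.floor_le _, (Int.lt_floor_add_one _).le⟩
  have hy : y ∈ f ⁻¹' Icc ⌊f x⌋ (⌊f x⌋ + 1) := by rw [mem_preimage, ← hfxy]; exact hx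
  have hpar : Φ (⌊f x⌋ % 2) x = Φ (⌊f x⌋ % 2) y := by
    rcases Int.emod_two_eq_zero_or_one ⌊f x⌋ with h | h <;> rw [h]
    exacts [congrArg Prod.fst hΦxy, congrArg Prod.snd hΦxy]
  refine hψ_inj _ (hIcc _ hx) (hIcc _ hy) ?_
  rw [← hΦ_eq _ _ rfl hx, ← hΦ_eq _ _ rfl hy, hpar]

theorem exists_notMem_secantCone_fst_ne_zero_snd_ne_zero [I.Boundaryless] [IsManifold I 1 M]
    [SigmaCompactSpace M] [FiniteDimensional ℝ G] (hG : 2 * finrank ℝ E + 1 ≤ finrank ℝ G)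
    {j : M → G × ℝ} (hj : ContMDiff I 𝓘(ℝ, G × ℝ) 1 j) :
    ∃ v : G × ℝ, v ∉ secantCone j ∧ v.1 ≠ 0 ∧ v.2 ≠ 0 := by
  have hdim : dimH (secantCone j ∪ range (ContinuousLinearMap.inl ℝ G ℝ) ∪
      range (ContinuousLinearMap.inr ℝ G ℝ)) < finrank ℝ (G × ℝ) := by
    rw [dimH_union, dimH_union, finrank_prod, finrank_self]
    refine max_lt (max_lt ((dimH_secantCone_le hj).trans_lt ?_) ?_) ?_
    · exact_mod_cast (by omega : 2 * finrank ℝ E + 1 < finrank ℝ G + 1)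
    · refine (ContinuousLinearMap.inl ℝ G ℝ).contDiff.dimH_range_le.trans_lt ?_
      exact_mod_cast Nat.lt_succ_self _
    · refine (ContinuousLinearMap.inr ℝ G ℝ).contDiff.dimH_range_le.trans_lt ?_
      rw [finrank_self]
      exact_mod_cast (by omega : 1 < finrank ℝ G + 1)
  obtain ⟨v, hv⟩ := (dense_compl_of_dimH_lt_finrank hdim).nonempty
  simp only [mem_compl_iff, mem_union, not_or] at hv
  obtain ⟨⟨hv_sec, hv_inl⟩, hv_inr⟩ := hv
  exact ⟨v, hv_sec, fun h => hv_inr ⟨v.2, Prod.ext h.symm rfl⟩,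
    fun h => hv_inl ⟨v.1, Prod.ext rfl h.symm⟩⟩

theorem exists_contMDiff_isClosedEmbedding_of_injective_prodMk [I.Boundaryless]
    [IsManifold I ∞ M] [SigmaCompactSpace M] [FiniteDimensional ℝ G]
    (hG : 2 * finrank ℝ E + 1 ≤ finrank ℝ G) {g : M → G} {f : M → ℝ}
    (hg : ContMDiff I 𝓘(ℝ, G) ∞ g) (hgb : Bornology.IsBounded (range g))
    (hf : ContMDiff I 𝓘(ℝ) ∞ f) (hfc : ∀ c, IsCompact (f ⁻¹' Iic c))
    (hinj : Injective fun x => (g x, f x)) :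
    ∃ i : M → G, ContMDiff I 𝓘(ℝ, G) ∞ i ∧ IsClosedEmbedding i := by
  obtain ⟨v, hv, hv₁, hv₂⟩ :=
    exists_notMem_secantCone_fst_ne_zero_snd_ne_zero hG ((hg.prodMk_space hf).of_le (by simp))
  let P : G × ℝ →L[ℝ] G :=
    ContinuousLinearMap.fst ℝ G ℝ - (ContinuousLinearMap.snd ℝ G ℝ).smulRight (v.2⁻¹ • v.1)
  have hker : LinearMap.ker (P : G × ℝ →ₗ[ℝ] G) ≤ ℝ ∙ v := by
    rintro ⟨a, s⟩ h
    refine Submodule.mem_span_singleton.mpr ⟨s * v.2⁻¹, Prod.ext ?_ ?_⟩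
    · have h' : a - s • v.2⁻¹ • v.1 = 0 := by simpa [P] using h
      simpa [mul_smul] using (sub_eq_zero.mp h').symm
    · simp [hv₂]
  have hPinj : InjOn P (range fun x => (g x, f x)) := injOn_range_of_ker_le_span hv hker
  have hproper : IsProperMap fun x => P (g x, f x) := by
    simpa [P] using isProperMap_sub_smul hg.continuous hgb hf.continuous hfc
      (smul_ne_zero (inv_ne_zero hv₂) hv₁)
  refine ⟨fun x => P (g x, f x), P.contMDiff.comp (hg.prodMk_space hf), ?_⟩
  exact .of_continuous_injective_isClosedMap hproper.continuous
    (fun x y h => hinj (hPinj (mem_range_self x) (mem_range_self y) h)) hproper.isClosedMap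

end Manifold

/-- Whitney embedding theorem with closed image: every smooth `n`-manifold admits a
smooth embedding into `ℝ^{2n+1}` as a closed subset. -/
theorem whitney_embedding_closed_image (n : ℕ) (M : Type*) [TopologicalSpace M]
    [ChartedSpace (EuclideanSpace ℝ (Fin n)) M]
    [IsManifold (𝓡 n) (⊤ : ℕ∞) M]
    [T2Space M] [SecondCountableTopology M] :
    ∃ i : M → EuclideanSpace ℝ (Fin (2 * n + 1)),
      ContMDiff (𝓡 n) 𝓘(ℝ, EuclideanSpace ℝ (Fin (2 * n + 1))) (⊤ : ℕ∞) i ∧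
      Topology.IsEmbedding i ∧ IsClosed (range i) := by
  have := Manifold.locallyCompact_of_finiteDimensional (M := M) (𝓡 n)
  have hdim : 2 * finrank ℝ (EuclideanSpace ℝ (Fin n)) + 1 ≤
      finrank ℝ (EuclideanSpace ℝ (Fin (2 * n + 1))) := by
    simp only [finrank_euclideanSpace_fin, le_refl]
  obtain ⟨f, hf, hfc⟩ := exists_contMDiff_isCompact_preimage_Iic (I := 𝓡 n) (M := M)
  obtain ⟨g, hg, hgb, hinj⟩ :=
    exists_contMDiff_bounded_injective_prodMk (I := 𝓡 n) hdim hf.continuous hfc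
  obtain ⟨i, hi, hemb⟩ :=
    exists_contMDiff_isClosedEmbedding_of_injective_prodMk hdim hg hgb hf hfc hinj
  exact ⟨i, hi, hemb.isEmbedding, hemb.isClosed_range⟩
end
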